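/- arXiv:1010.2733 — 8 statements merged into one kernel-verified Lean document; each statement's English description precedes it below -/
import Mathlib

section
/- Let A be the incidence matrix of a directed graph with finite edge set E and finite vertex set V. For every flow F : E → ℝ and every vertex function u : V → ℝ, the inner product of F with the combinatorial gradient Au is bounded by the inner product of the point-wise flow norms: Fᵀ(Au) ≤ (√(|Aᵀ|F²))ᵀ · √(|Aᵀ|(Au)²), where all squares and square roots of vectors are taken entrywise. -/
open Matrix BigOperators

/- Every edge is incident to exactly two vertices, so summing `|A e i| * x e` over all
vertices and edges counts each edge twice. Hence `Fᵀ(Au)` is half the sum over the vertices `i`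
of the local pairings `∑ₑ |A e i| * F e * (Au) e`, and each of these is bounded by the
Cauchy–Schwarz inequality with weights `|A e i|`. -/

/-- `A` is the incidence matrix of a directed graph: each row (edge) has exactly one
entry `+1` and one entry `-1` at two distinct vertices, all other entries `0`. -/
def IsIncidenceMatrix {E V : Type*} (A : Matrix E V ℝ) : Prop :=
  ∀ e : E, ∃ i j : V, i ≠ j ∧ A e i = 1 ∧ A e j = -1 ∧
    ∀ k : V, k ≠ i → k ≠ j → A e k = 0

theorem Real.sum_mul_mul_le_sqrt_mul_sqrt {ι : Type*} (s : Finset ι) {w : ι → ℝ}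
    (hw : ∀ i, 0 ≤ w i) (f g : ι → ℝ) :
    ∑ i ∈ s, w i * (f i * g i) ≤ √(∑ i ∈ s, w i * f i ^ 2) * √(∑ i ∈ s, w i * g i ^ 2) :=
  calc ∑ i ∈ s, w i * (f i * g i)
      ≤ ∑ i ∈ s, √(w i * f i ^ 2) * √(w i * g i ^ 2) := by
        refine Finset.sum_le_sum fun i _ => ?_
        rw [← Real.sqrt_mul (mul_nonneg (hw i) (sq_nonneg _))]
        exact Real.le_sqrt_of_sq_le (le_of_eq (by ring))
    _ ≤ √(∑ i ∈ s, w i * f i ^ 2) * √(∑ i ∈ s, w i * g i ^ 2) :=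
        Real.sum_sqrt_mul_sqrt_le s (fun i => mul_nonneg (hw i) (sq_nonneg _))
          (fun i => mul_nonneg (hw i) (sq_nonneg _))

namespace IsIncidenceMatrix

variable {E V : Type*} [Fintype V] {A : Matrix E V ℝ}

theorem sum_abs_row (hA : IsIncidenceMatrix A) (e : E) : ∑ i, |A e i| = 2 := by
  classical
  obtain ⟨i, j, hij, hi, hj, hzero⟩ := hA e
  rw [← Finset.sum_subset (Finset.subset_univ {i, j}) fun k _ hk => ?_,
    Finset.sum_pair hij, hi, hj]
  · norm_num
  · simp only [Finset.mem_insert, Finset.mem_singleton, not_or] at hk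
    rw [hzero k hk.1 hk.2, abs_zero]

theorem sum_sum_abs_mul [Fintype E] (hA : IsIncidenceMatrix A) (x : E → ℝ) :
    ∑ i, ∑ e, |A e i| * x e = 2 * ∑ e, x e := by
  simp only [Finset.sum_comm (γ := V), ← Finset.sum_mul, hA.sum_abs_row, Finset.mul_sum]

end IsIncidenceMatrix

theorem stmt_0_general {E V : Type*} [Fintype E] [Fintype V]
    (A : Matrix E V ℝ) (hA : IsIncidenceMatrix A)
    (F : E → ℝ) (u : V → ℝ) :
    ∑ e, F e * (A *ᵥ u) e ≤
      ∑ i, Real.sqrt (∑ e, |A e i| * (F e) ^ 2) *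
        Real.sqrt (∑ e, |A e i| * ((A *ᵥ u) e) ^ 2) := by
  set G := A *ᵥ u
  calc ∑ e, F e * G e = (∑ i, ∑ e, |A e i| * (F e * G e)) / 2 := by
        rw [hA.sum_sum_abs_mul]; ring
    _ ≤ (∑ i, √(∑ e, |A e i| * F e ^ 2) * √(∑ e, |A e i| * G e ^ 2)) / 2 := by
        gcongr with i
        exact Real.sum_mul_mul_le_sqrt_mul_sqrt _ (fun e => abs_nonneg _) F G
    _ ≤ ∑ i, √(∑ e, |A e i| * F e ^ 2) * √(∑ e, |A e i| * G e ^ 2) :=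
        half_le_self (Finset.sum_nonneg fun i _ => by positivity)

/-- For every flow `F` and vertex function `u`,
`Fᵀ(Au) ≤ (√(|Aᵀ|F²))ᵀ ⬝ √(|Aᵀ|(Au)²)` (squares and square roots entrywise). -/
theorem stmt_0 {E V : Type*} [Fintype E] [Fintype V] [Nonempty E] [Nonempty V]
    (A : Matrix E V ℝ) (hA : IsIncidenceMatrix A)
    (F : E → ℝ) (u : V → ℝ) :
    ∑ e, F e * (A *ᵥ u) e ≤
      ∑ i, Real.sqrt (∑ e, |A e i| * (F e) ^ 2) *
        Real.sqrt (∑ e, |A e i| * ((A *ᵥ u) e) ^ 2) :=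
  stmt_0_general A hA F u
end

section
/- (Weak duality of the combinatorial flow norm.) Let A be the incidence matrix of a directed graph with finite edge set E and finite vertex set V, let g : V → ℝ, let F : E → ℝ be a flow satisfying the capacity constraint √(|Aᵀ|F²) ≤ g entrywise, and let u : V → ℝ. Then Fᵀ(Au) ≤ gᵀ √(|Aᵀ|(Au)²). -/
open Matrix BigOperators

/-!
Every row of `|A|` sums to `2 ≥ 1`, so `∑ₑ Fₑ wₑ ≤ ∑ᵢ ∑ₑ |A|ₑᵢ |Fₑ| |wₑ|`. At each vertex
`i` the inner sum is bounded by Cauchy–Schwarz with the weights `|A|ₑᵢ`, giving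
`√((|Aᵀ|F²)ᵢ) · √((|Aᵀ|w²)ᵢ) ≤ gᵢ √((|Aᵀ|w²)ᵢ)`.
-/

lemma IsIncidenceMatrix.sum_abs_row_s1 {E V : Type*} [Fintype V] {A : Matrix E V ℝ}
    (hA : IsIncidenceMatrix A) (e : E) : ∑ i, |A e i| = 2 := by
  classical
  obtain ⟨i, j, hij, hi, hj, hzero⟩ := hA e
  rw [← Finset.add_sum_erase _ _ (Finset.mem_univ i),
    Finset.sum_eq_single_of_mem j (Finset.mem_erase.2 ⟨hij.symm, Finset.mem_univ j⟩)
      fun k hk hkj => by rw [hzero k (Finset.mem_erase.1 hk).1 hkj, abs_zero],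
    hi, hj]
  norm_num

lemma Real.sum_mul_abs_mul_abs_le_sqrt_mul_sqrt {ι : Type*} (s : Finset ι) {a : ι → ℝ}
    (ha : ∀ k, 0 ≤ a k) (x y : ι → ℝ) :
    ∑ k ∈ s, a k * (|x k| * |y k|) ≤
      √(∑ k ∈ s, a k * x k ^ 2) * √(∑ k ∈ s, a k * y k ^ 2) := by
  have hterm : ∀ k, a k * (|x k| * |y k|) = √(a k * x k ^ 2) * √(a k * y k ^ 2) := fun k => by
    rw [Real.sqrt_mul (ha k), Real.sqrt_mul (ha k), Real.sqrt_sq_eq_abs, Real.sqrt_sq_eq_abs,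
      mul_mul_mul_comm, Real.mul_self_sqrt (ha k)]
  simp only [hterm]
  exact Real.sum_sqrt_mul_sqrt_le s (fun k => mul_nonneg (ha k) (sq_nonneg _))
    (fun k => mul_nonneg (ha k) (sq_nonneg _))

theorem sum_mul_le_sum_mul_sqrt_of_one_le_sum_abs_row {E V : Type*} [Fintype E] [Fintype V]
    (A : Matrix E V ℝ) (hA : ∀ e, 1 ≤ ∑ i, |A e i|) (g : V → ℝ) (F w : E → ℝ)
    (hcap : ∀ i, √(∑ e, |A e i| * F e ^ 2) ≤ g i) :
    ∑ e, F e * w e ≤ ∑ i, g i * √(∑ e, |A e i| * w e ^ 2) :=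
  calc ∑ e, F e * w e
      ≤ ∑ e, ∑ i, |A e i| * (|F e| * |w e|) := Finset.sum_le_sum fun e _ => by
        rw [← Finset.sum_mul]
        calc F e * w e ≤ |F e| * |w e| := abs_mul (F e) (w e) ▸ le_abs_self _
          _ ≤ (∑ i, |A e i|) * (|F e| * |w e|) :=
            le_mul_of_one_le_left (by positivity) (hA e)
    _ = ∑ i, ∑ e, |A e i| * (|F e| * |w e|) := Finset.sum_comm
    _ ≤ ∑ i, √(∑ e, |A e i| * F e ^ 2) * √(∑ e, |A e i| * w e ^ 2) :=
        Finset.sum_le_sum fun i _ =>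
          Real.sum_mul_abs_mul_abs_le_sqrt_mul_sqrt _ (fun e => abs_nonneg _) F w
    _ ≤ ∑ i, g i * √(∑ e, |A e i| * w e ^ 2) :=
        Finset.sum_le_sum fun i _ => mul_le_mul_of_nonneg_right (hcap i) (Real.sqrt_nonneg _)

theorem stmt_1_general {E V : Type*} [Fintype E] [Fintype V]
    (A : Matrix E V ℝ) (hA : IsIncidenceMatrix A)
    (g : V → ℝ) (F : E → ℝ)
    (hcap : ∀ i : V, Real.sqrt (∑ e, |A e i| * (F e) ^ 2) ≤ g i)
    (u : V → ℝ) :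
    ∑ e, F e * (A *ᵥ u) e ≤
      ∑ i, g i * Real.sqrt (∑ e, |A e i| * ((A *ᵥ u) e) ^ 2) :=
  sum_mul_le_sum_mul_sqrt_of_one_le_sum_abs_row A
    (fun e => one_le_two.trans (hA.sum_abs_row_s1 e).ge) g F (A *ᵥ u) hcap

/-- Weak duality of the combinatorial flow norm: if `√(|Aᵀ|F²) ≤ g` entrywise,
then `Fᵀ(Au) ≤ gᵀ √(|Aᵀ|(Au)²)`. -/
theorem stmt_1 {E V : Type*} [Fintype E] [Fintype V] [Nonempty E] [Nonempty V]
    (A : Matrix E V ℝ) (hA : IsIncidenceMatrix A)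
    (g : V → ℝ) (F : E → ℝ)
    (hcap : ∀ i : V, Real.sqrt (∑ e, |A e i| * (F e) ^ 2) ≤ g i)
    (u : V → ℝ) :
    ∑ e, F e * (A *ᵥ u) e ≤
      ∑ i, g i * Real.sqrt (∑ e, |A e i| * ((A *ᵥ u) e) ^ 2) :=
  stmt_1_general A hA g F hcap u
end

section
/- (Weak Lagrangian duality for CCMF.) Let A be the incidence matrix of a directed graph with finite edge set E and finite vertex set V, let g : V → ℝ, and let c : E → ℝ. Suppose F : E → ℝ is feasible for the CCMF problem, i.e. AᵀF = 0 and |Aᵀ|F² ≤ g² entrywise. Then for every λ : V → ℝ with λ ≥ 0 and (|A|λ)_e > 0 for every edge e, and every ν : V → ℝ, one has cᵀF ≤ λᵀg² + (1/4) Σ_{e ∈ E} (c + Aν)_e² / (|A|λ)_e. -/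
open Matrix BigOperators

/-!
Lagrangian weak duality. Adding `(Aν)ᵀF = νᵀ(AᵀF) = 0` to the objective, each edge term
`(c + Aν)_e F_e` is at most `(c + Aν)_e² / (4β_e) + β_e F_e²` with `β = |A|λ > 0` (AM-GM),
and `Σ_e β_e F_e² = λᵀ(|Aᵀ|F²) ≤ λᵀg²` by the capacity constraint and `λ ≥ 0`.
-/

namespace Matrix

variable {E V : Type*} [Fintype E] [Fintype V]

theorem mulVec_dotProduct_eq_zero_of_transpose_mulVec_eq_zero {R : Type*} [CommSemiring R]
    {A : Matrix E V R} {F : E → R} (hdiv : Aᵀ *ᵥ F = 0) (ν : V → R) : (A *ᵥ ν) ⬝ᵥ F = 0 := by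
  rw [← vecMul_transpose, ← dotProduct_mulVec, hdiv, dotProduct_zero]

theorem sum_mulVec_mul_le_of_forall_sum_le (B : Matrix E V ℝ) {w : E → ℝ} {u lam : V → ℝ}
    (hlam : ∀ i, 0 ≤ lam i) (hcap : ∀ i, ∑ e, B e i * w e ≤ u i) :
    ∑ e, (B *ᵥ lam) e * w e ≤ ∑ i, lam i * u i := by
  calc ∑ e, (B *ᵥ lam) e * w e = ∑ i, lam i * ∑ e, B e i * w e := by
        simp only [mulVec, dotProduct, Finset.sum_mul, Finset.mul_sum]
        rw [Finset.sum_comm]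
        exact Finset.sum_congr rfl fun i _ => Finset.sum_congr rfl fun e _ => by ring
    _ ≤ ∑ i, lam i * u i :=
        Finset.sum_le_sum fun i _ => mul_le_mul_of_nonneg_left (hcap i) (hlam i)

end Matrix

theorem mul_le_sq_div_add_mul_sq {b : ℝ} (hb : 0 < b) (a x : ℝ) :
    a * x ≤ 1 / 4 * (a ^ 2 / b) + b * x ^ 2 := by
  have key : 0 ≤ (a - 2 * b * x) ^ 2 / (4 * b) := by positivity
  have expand : (a - 2 * b * x) ^ 2 / (4 * b) = 1 / 4 * (a ^ 2 / b) + b * x ^ 2 - a * x := by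
    field_simp
    ring
  linarith

theorem stmt_3_general {E V : Type*} [Fintype E] [Fintype V]
    (A : Matrix E V ℝ)
    (g : V → ℝ) (c : E → ℝ) (F : E → ℝ)
    (hdiv : Aᵀ *ᵥ F = 0)
    (hcap : ∀ i : V, ∑ e, |A e i| * (F e) ^ 2 ≤ (g i) ^ 2)
    (lam : V → ℝ) (hlam : ∀ i : V, 0 ≤ lam i)
    (hpos : ∀ e : E, 0 < ∑ i, |A e i| * lam i)
    (ν : V → ℝ) :
    ∑ e, c e * F e ≤
      ∑ i, lam i * (g i) ^ 2 +
        (1 / 4) * ∑ e, (c e + (A *ᵥ ν) e) ^ 2 / (∑ i, |A e i| * lam i) := by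
  set β : E → ℝ := fun e => ∑ i, |A e i| * lam i
  have hweighted : ∑ e, β e * F e ^ 2 ≤ ∑ i, lam i * g i ^ 2 :=
    sum_mulVec_mul_le_of_forall_sum_le (A.map abs) hlam hcap
  calc ∑ e, c e * F e = ∑ e, (c e + (A *ᵥ ν) e) * F e := by
        simp only [add_mul, Finset.sum_add_distrib]
        rw [show ∑ e, (A *ᵥ ν) e * F e = 0 from
          mulVec_dotProduct_eq_zero_of_transpose_mulVec_eq_zero hdiv ν, add_zero]
    _ ≤ ∑ e, (1 / 4 * ((c e + (A *ᵥ ν) e) ^ 2 / β e) + β e * F e ^ 2) :=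
        Finset.sum_le_sum fun e _ => mul_le_sq_div_add_mul_sq (hpos e) _ _
    _ = ∑ e, β e * F e ^ 2 + 1 / 4 * ∑ e, (c e + (A *ᵥ ν) e) ^ 2 / β e := by
        rw [Finset.sum_add_distrib, Finset.mul_sum, add_comm]
    _ ≤ _ := by gcongr

/-- Weak Lagrangian duality for CCMF: any feasible flow value `cᵀF` is bounded by the
dual objective `λᵀg² + (1/4) Σ_e (c + Aν)_e² / (|A|λ)_e`. -/
theorem stmt_3 {E V : Type*} [Fintype E] [Fintype V] [Nonempty E] [Nonempty V]
    (A : Matrix E V ℝ) (hA : IsIncidenceMatrix A)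
    (g : V → ℝ) (c : E → ℝ) (F : E → ℝ)
    (hdiv : Aᵀ *ᵥ F = 0)
    (hcap : ∀ i : V, ∑ e, |A e i| * (F e) ^ 2 ≤ (g i) ^ 2)
    (lam : V → ℝ) (hlam : ∀ i : V, 0 ≤ lam i)
    (hpos : ∀ e : E, 0 < ∑ i, |A e i| * lam i)
    (ν : V → ℝ) :
    ∑ e, c e * F e ≤
      ∑ i, lam i * (g i) ^ 2 +
        (1 / 4) * ∑ e, (c e + (A *ᵥ ν) e) ^ 2 / (∑ i, |A e i| * lam i) :=
  stmt_3_general A g c F hdiv hcap lam hlam hpos ν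
end

section
/- (Maximizer of the CCMF Lagrangian in the flow variable.) Let A be a matrix in Matrix E V ℝ with E, V finite, let c : E → ℝ, λ : V → ℝ, ν : V → ℝ, and assume (|A|λ)_e > 0 for every edge e. Define F* : E → ℝ by F*_e = (c + Aν)_e / (2 (|A|λ)_e). Then F* maximizes the concave quadratic F ↦ (c + Aν)ᵀF − λᵀ(|Aᵀ|F²) over all F : E → ℝ; that is, for every F : E → ℝ, (c + Aν)ᵀF − λᵀ(|Aᵀ|F²) ≤ (c + Aν)ᵀF* − λᵀ(|Aᵀ|F*²). -/
open Matrix BigOperators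

/-- The flow `F*` with `F*_e = (c + Aν)_e / (2 (|A|λ)_e)` maximizes the concave
quadratic `F ↦ (c + Aν)ᵀF − λᵀ(|Aᵀ|F²)` over all flows `F`. -/
theorem stmt_4 {E V : Type*} [Fintype E] [Fintype V] [Nonempty E] [Nonempty V]
    (A : Matrix E V ℝ) (c : E → ℝ) (lam : V → ℝ) (ν : V → ℝ)
    (hpos : ∀ e : E, 0 < ∑ i, |A e i| * lam i)
    (Fstar : E → ℝ)
    (hFstar : ∀ e : E, Fstar e = (c e + (A *ᵥ ν) e) / (2 * ∑ i, |A e i| * lam i))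
    (F : E → ℝ) :
    ∑ e, (c e + (A *ᵥ ν) e) * F e - ∑ i, lam i * ∑ e, |A e i| * (F e) ^ 2 ≤
      ∑ e, (c e + (A *ᵥ ν) e) * Fstar e - ∑ i, lam i * ∑ e, |A e i| * (Fstar e) ^ 2 := by
  set b : E → ℝ := fun e => c e + (A *ᵥ ν) e with hb
  set a : E → ℝ := fun e => ∑ i, |A e i| * lam i with ha
  have key : ∀ G : E → ℝ,
      ∑ e, b e * G e - ∑ i, lam i * ∑ e, |A e i| * (G e) ^ 2
        = ∑ e, (b e * G e - a e * (G e) ^ 2) := by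
    intro G
    rw [Finset.sum_sub_distrib]
    congr 1
    simp only [Finset.mul_sum, ha, Finset.sum_mul]
    rw [Finset.sum_comm]
    congr 1; ext e; congr 1; ext i; ring
  rw [key, key]
  apply Finset.sum_le_sum
  intro e _
  have hae := hpos e
  have hF : Fstar e = b e / (2 * a e) := hFstar e
  have hae' : (0:ℝ) < a e := hae
  have heq : b e * Fstar e - a e * (Fstar e) ^ 2 = b e ^ 2 / (4 * a e) := by
    rw [hF]; field_simp; ring
  rw [heq, le_div_iff₀ (by positivity)]
  nlinarith [sq_nonneg (b e - 2 * a e * F e)]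
end

section
/- (Value of the CCMF dual function.) Let A be a matrix in Matrix E V ℝ with E, V finite, let c : E → ℝ, g : V → ℝ, λ : V → ℝ, ν : V → ℝ, and assume (|A|λ)_e > 0 for every edge e. Define F* : E → ℝ by F*_e = (c + Aν)_e / (2 (|A|λ)_e). Then (c + Aν)ᵀF* − λᵀ(|Aᵀ|F*² − g²) = λᵀg² + (1/4) Σ_{e ∈ E} (c + Aν)_e² / (|A|λ)_e. -/
open Matrix BigOperators

/-! At the stationary flow `F_e = b_e / (2 s_e)`, with `b = c + Aν` and `s = |A|λ`, each edge
contributes `b_e F_e - s_e F_e² = b_e² / (4 s_e)` to the Lagrangian; exchanging the order of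
summation turns `λᵀ(|Aᵀ|F²)` into `Σ_e s_e F_e²`, which is what makes the edges decouple. -/

lemma mul_div_two_mul_sub_mul_div_two_mul_sq {K : Type*} [Field K] [NeZero (2 : K)]
    (b s : K) (hs : s ≠ 0) :
    b * (b / (2 * s)) - s * (b / (2 * s)) ^ 2 = 1 / 4 * (b ^ 2 / s) := by
  have h4 : (4 : K) ≠ 0 := by
    rw [show (4 : K) = 2 * 2 by norm_num]
    exact mul_ne_zero two_ne_zero two_ne_zero
  field_simp
  ring

lemma sum_mul_sum_mul_eq_sum_sum_mul_mul {E V R : Type*} [Fintype E] [Fintype V]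
    [CommSemiring R] (M : Matrix E V R) (lam : V → R) (w : E → R) :
    ∑ i, lam i * ∑ e, M e i * w e = ∑ e, (∑ i, M e i * lam i) * w e := by
  simp_rw [Finset.mul_sum, Finset.sum_mul]
  rw [Finset.sum_comm]
  exact Finset.sum_congr rfl fun _ _ => Finset.sum_congr rfl fun _ _ => by ring

theorem stmt_5_general {E V : Type*} [Fintype E] [Fintype V]
    (A : Matrix E V ℝ) (c : E → ℝ) (g : V → ℝ) (lam : V → ℝ) (ν : V → ℝ)
    (hpos : ∀ e : E, 0 < ∑ i, |A e i| * lam i)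
    (Fstar : E → ℝ)
    (hFstar : ∀ e : E, Fstar e = (c e + (A *ᵥ ν) e) / (2 * ∑ i, |A e i| * lam i)) :
    ∑ e, (c e + (A *ᵥ ν) e) * Fstar e -
        ∑ i, lam i * ((∑ e, |A e i| * (Fstar e) ^ 2) - (g i) ^ 2) =
      ∑ i, lam i * (g i) ^ 2 +
        (1 / 4) * ∑ e, (c e + (A *ᵥ ν) e) ^ 2 / (∑ i, |A e i| * lam i) := by
  have hedge : ∀ e, (c e + (A *ᵥ ν) e) * Fstar e - (∑ i, |A e i| * lam i) * Fstar e ^ 2 =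
      1 / 4 * ((c e + (A *ᵥ ν) e) ^ 2 / ∑ i, |A e i| * lam i) := fun e => by
    rw [hFstar e]
    exact mul_div_two_mul_sub_mul_div_two_mul_sq _ _ (hpos e).ne'
  have hswap := sum_mul_sum_mul_eq_sum_sum_mul_mul (fun e i => |A e i|) lam (Fstar · ^ 2)
  simp only [mul_sub, Finset.sum_sub_distrib, hswap]
  rw [Finset.mul_sum, ← Finset.sum_congr rfl fun e _ => hedge e, Finset.sum_sub_distrib]
  ring

/-- Value of the CCMF dual function: evaluating the Lagrangian
`(c + Aν)ᵀF − λᵀ(|Aᵀ|F² − g²)` at the stationary flow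
`F*_e = (c + Aν)_e / (2 (|A|λ)_e)` yields
`λᵀg² + (1/4) Σ_e (c + Aν)_e² / (|A|λ)_e`. -/
theorem stmt_5 {E V : Type*} [Fintype E] [Fintype V] [Nonempty E] [Nonempty V]
    (A : Matrix E V ℝ) (c : E → ℝ) (g : V → ℝ) (lam : V → ℝ) (ν : V → ℝ)
    (hpos : ∀ e : E, 0 < ∑ i, |A e i| * lam i)
    (Fstar : E → ℝ)
    (hFstar : ∀ e : E, Fstar e = (c e + (A *ᵥ ν) e) / (2 * ∑ i, |A e i| * lam i)) :
    ∑ e, (c e + (A *ᵥ ν) e) * Fstar e -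
        ∑ i, lam i * ((∑ e, |A e i| * (Fstar e) ^ 2) - (g i) ^ 2) =
      ∑ i, lam i * (g i) ^ 2 +
        (1 / 4) * ∑ e, (c e + (A *ᵥ ν) e) ^ 2 / (∑ i, |A e i| * lam i) :=
  stmt_5_general A c g lam ν hpos Fstar hFstar
end

section
/- (Optimal CCMF flow value equals twice the weighted cut.) Let A be a matrix in Matrix E V ℝ with E, V finite, let c : E → ℝ, g : V → ℝ. Suppose F : E → ℝ, λ : V → ℝ and ν : V → ℝ satisfy: stationarity, i.e. (c + Aν)_e = 2 (|A|λ)_e F_e for every edge e; the divergence-free constraint AᵀF = 0; and complementary slackness, i.e. λ_i · ((|Aᵀ|F²)_i − g_i²) = 0 for every vertex i. Then cᵀF = 2 λᵀg². -/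
open Matrix BigOperators

/-
The flow value is `cᵀF = (c + Aν)ᵀF - νᵀ(AᵀF)`, and the second term vanishes because `F` is
divergence free. Stationarity turns the first term into `2 Σₑ (|A|λ)ₑ Fₑ²`, which after
exchanging the sums is `2 Σᵢ λᵢ (|Aᵀ|F²)ᵢ`; complementary slackness replaces each
`λᵢ (|Aᵀ|F²)ᵢ` by `λᵢ gᵢ²`.
-/

section

variable {R E V : Type*} [CommSemiring R] [Fintype E] [Fintype V]

theorem sum_mulVec_mul_eq_zero_of_transpose_mulVec_eq_zero (A : Matrix E V R) (ν : V → R)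
    {F : E → R} (hF : Aᵀ *ᵥ F = 0) : ∑ e, (A *ᵥ ν) e * F e = 0 := by
  change (A *ᵥ ν) ⬝ᵥ F = 0
  rw [dotProduct_comm, dotProduct_mulVec, ← mulVec_transpose, hF, zero_dotProduct]

theorem sum_sum_mul_mul_eq_sum_mul_sum (B : E → V → R) (lam : V → R) (w : E → R) :
    ∑ e, (∑ i, B e i * lam i) * w e = ∑ i, lam i * ∑ e, B e i * w e := by
  simp_rw [Finset.sum_mul, Finset.mul_sum]
  rw [Finset.sum_comm]
  exact Finset.sum_congr rfl fun i _ => Finset.sum_congr rfl fun e _ => by ring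

end

theorem stmt_6_general {E V : Type*} [Fintype E] [Fintype V]
    (A : Matrix E V ℝ) (c : E → ℝ) (g : V → ℝ)
    (F : E → ℝ) (lam : V → ℝ) (ν : V → ℝ)
    (hstat : ∀ e : E, c e + (A *ᵥ ν) e = 2 * (∑ i, |A e i| * lam i) * F e)
    (hdiv : Aᵀ *ᵥ F = 0)
    (hcs : ∀ i : V, lam i * ((∑ e, |A e i| * (F e) ^ 2) - (g i) ^ 2) = 0) :
    ∑ e, c e * F e = 2 * ∑ i, lam i * (g i) ^ 2 := by
  calc ∑ e, c e * F e
      = ∑ e, (2 * ((∑ i, |A e i| * lam i) * F e ^ 2) - (A *ᵥ ν) e * F e) :=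
        Finset.sum_congr rfl fun e _ => by linear_combination F e * hstat e
    _ = 2 * ∑ e, (∑ i, |A e i| * lam i) * F e ^ 2 := by
        rw [Finset.sum_sub_distrib, sum_mulVec_mul_eq_zero_of_transpose_mulVec_eq_zero A ν hdiv,
          sub_zero, Finset.mul_sum]
    _ = 2 * ∑ i, lam i * (g i) ^ 2 := by
        rw [sum_sum_mul_mul_eq_sum_mul_sum fun e i => |A e i|]
        congr 1
        exact Finset.sum_congr rfl fun i _ => by linear_combination hcs i

/-- At a KKT point of the CCMF problem (stationarity, zero divergence, complementary
slackness), the optimal flow value equals twice the weighted cut: `cᵀF = 2 λᵀg²`. -/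
theorem stmt_6 {E V : Type*} [Fintype E] [Fintype V] [Nonempty E] [Nonempty V]
    (A : Matrix E V ℝ) (c : E → ℝ) (g : V → ℝ)
    (F : E → ℝ) (lam : V → ℝ) (ν : V → ℝ)
    (hstat : ∀ e : E, c e + (A *ᵥ ν) e = 2 * (∑ i, |A e i| * lam i) * F e)
    (hdiv : Aᵀ *ᵥ F = 0)
    (hcs : ∀ i : V, lam i * ((∑ e, |A e i| * (F e) ^ 2) - (g i) ^ 2) = 0) :
    ∑ e, c e * F e = 2 * ∑ i, lam i * (g i) ^ 2 :=
  stmt_6_general A c g F lam ν hstat hdiv hcs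
end

section
/- (Summed saturation identity.) Let A be a matrix in Matrix E V ℝ with E, V finite, let c : E → ℝ, g : V → ℝ. Suppose F : E → ℝ, λ : V → ℝ and ν : V → ℝ satisfy (|A|λ)_e > 0 for every edge e, the stationarity condition (c + Aν)_e = 2 (|A|λ)_e F_e for every edge e, and complementary slackness λ_i · ((|Aᵀ|F²)_i − g_i²) = 0 for every vertex i. Then Σ_{e ∈ E} (c + Aν)_e² / (|A|λ)_e = 4 λᵀg². -/
open Matrix BigOperators

/-! Stationarity gives `(c + Aν)_e² / (|A|λ)_e = 4 (|A|λ)_e F_e²`. Summing over the edges and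
exchanging the order of summation turns the right side into `4 Σ_i λ_i (|Aᵀ|F²)_i`, and
complementary slackness replaces each `λ_i (|Aᵀ|F²)_i` by `λ_i g_i²`. -/

lemma sq_two_mul_mul_div_self {K : Type*} [Field K] {w : K} (hw : w ≠ 0) (f : K) :
    (2 * w * f) ^ 2 / w = 4 * (w * f ^ 2) := by
  field_simp
  ring

lemma Finset.sum_sum_mul_comm {E V R : Type*} [Fintype E] [Fintype V] [CommSemiring R]
    (B : E → V → R) (x : V → R) (y : E → R) :
    ∑ e, (∑ i, B e i * x i) * y e = ∑ i, x i * ∑ e, B e i * y e := by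
  simp_rw [Finset.sum_mul, Finset.mul_sum]
  rw [Finset.sum_comm]
  refine Finset.sum_congr rfl fun i _ => Finset.sum_congr rfl fun e _ => ?_
  ring

theorem stmt_8_general {E V : Type*} [Fintype E] [Fintype V]
    (A : Matrix E V ℝ) (c : E → ℝ) (g : V → ℝ)
    (F : E → ℝ) (lam : V → ℝ) (ν : V → ℝ)
    (hpos : ∀ e : E, 0 < ∑ i, |A e i| * lam i)
    (hstat : ∀ e : E, c e + (A *ᵥ ν) e = 2 * (∑ i, |A e i| * lam i) * F e)
    (hcs : ∀ i : V, lam i * ((∑ e, |A e i| * (F e) ^ 2) - (g i) ^ 2) = 0) :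
    ∑ e, (c e + (A *ᵥ ν) e) ^ 2 / (∑ i, |A e i| * lam i) =
      4 * ∑ i, lam i * (g i) ^ 2 := by
  have hsat : ∀ i, lam i * ∑ e, |A e i| * F e ^ 2 = lam i * g i ^ 2 := fun i =>
    sub_eq_zero.mp (by rw [← mul_sub]; exact hcs i)
  calc ∑ e, (c e + (A *ᵥ ν) e) ^ 2 / (∑ i, |A e i| * lam i)
      = 4 * ∑ e, (∑ i, |A e i| * lam i) * F e ^ 2 := by
        rw [Finset.mul_sum]
        refine Finset.sum_congr rfl fun e _ => ?_
        rw [hstat e, sq_two_mul_mul_div_self (hpos e).ne']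
    _ = 4 * ∑ i, lam i * (g i) ^ 2 := by
        rw [Finset.sum_sum_mul_comm]
        simp only [hsat]

/-- Summed saturation identity: at a KKT point of the CCMF problem,
`Σ_e (c + Aν)_e² / (|A|λ)_e = 4 λᵀg²`. -/
theorem stmt_8 {E V : Type*} [Fintype E] [Fintype V] [Nonempty E] [Nonempty V]
    (A : Matrix E V ℝ) (c : E → ℝ) (g : V → ℝ)
    (F : E → ℝ) (lam : V → ℝ) (ν : V → ℝ)
    (hpos : ∀ e : E, 0 < ∑ i, |A e i| * lam i)
    (hstat : ∀ e : E, c e + (A *ᵥ ν) e = 2 * (∑ i, |A e i| * lam i) * F e)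
    (hcs : ∀ i : V, lam i * ((∑ e, |A e i| * (F e) ^ 2) - (g i) ^ 2) = 0) :
    ∑ e, (c e + (A *ᵥ ν) e) ^ 2 / (∑ i, |A e i| * lam i) =
      4 * ∑ i, lam i * (g i) ^ 2 :=
  stmt_8_general A c g F lam ν hpos hstat hcs
end

section
/- (KKT sufficiency for CCMF optimality.) Let A be a matrix in Matrix E V ℝ with E, V finite, let c : E → ℝ, g : V → ℝ. Suppose F* : E → ℝ, λ : V → ℝ and ν : V → ℝ satisfy: λ ≥ 0 entrywise; (|A|λ)_e > 0 for every edge e; primal feasibility AᵀF* = 0 and (|Aᵀ|F*²)_i ≤ g_i² for every vertex i; stationarity (c + Aν)_e = 2 (|A|λ)_e F*_e for every edge e; and complementary slackness λ_i · ((|Aᵀ|F*²)_i − g_i²) = 0 for every vertex i. Then F* is optimal for the CCMF problem: for every F : E → ℝ with AᵀF = 0 and (|Aᵀ|F²)_i ≤ g_i² for every vertex i, one has cᵀF ≤ cᵀF*. -/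
/-!
With weights `w = |A| λ ≥ 0`, stationarity says `c = 2 w F* - A ν`, and `A ν` is orthogonal
to every divergence-free flow, so `cᵀF = 2 ∑ w F* F` on feasible flows. By AM-GM,
`2 ∑ w F* F ≤ ∑ w F² + ∑ w F*²`, and `∑ w F² = λᵀ(|Aᵀ| F²) ≤ λᵀ g² = ∑ w F*²`, the last
equality being complementary slackness. Hence `cᵀF ≤ 2 ∑ w F*² = cᵀF*`.
-/

open Matrix

section

variable {E V R : Type*} [Fintype E] [Fintype V]

theorem dotProduct_mulVec_eq_zero_of_transpose_mulVec_eq_zero [CommSemiring R]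
    (A : Matrix E V R) (ν : V → R) {G : E → R} (hG : Aᵀ *ᵥ G = 0) :
    A *ᵥ ν ⬝ᵥ G = 0 := by
  rw [dotProduct_comm, dotProduct_mulVec, ← mulVec_transpose, hG, zero_dotProduct]

theorem dotProduct_eq_of_add_mulVec_eq [CommSemiring R] {A : Matrix E V R} {c u : E → R}
    {ν : V → R} (h : c + A *ᵥ ν = u) {G : E → R} (hG : Aᵀ *ᵥ G = 0) :
    c ⬝ᵥ G = u ⬝ᵥ G := by
  rw [← h, add_dotProduct, dotProduct_mulVec_eq_zero_of_transpose_mulVec_eq_zero A ν hG,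
    add_zero]

theorem mulVec_dotProduct_le_of_complementary_slackness [CommRing R] [PartialOrder R]
    [IsOrderedRing R] (B : Matrix E V R) {lam g : V → R} {x y : E → R} (hlam : 0 ≤ lam)
    (hx : Bᵀ *ᵥ x ≤ g) (hy : ∀ i, lam i * ((Bᵀ *ᵥ y) i - g i) = 0) :
    B *ᵥ lam ⬝ᵥ x ≤ B *ᵥ lam ⬝ᵥ y := by
  have hswap : ∀ z : E → R, B *ᵥ lam ⬝ᵥ z = Bᵀ *ᵥ z ⬝ᵥ lam := fun z => by
    rw [dotProduct_comm, dotProduct_mulVec, mulVec_transpose]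
  have hg : g ⬝ᵥ lam = Bᵀ *ᵥ y ⬝ᵥ lam :=
    Finset.sum_congr rfl fun i _ => by linear_combination -hy i
  rw [hswap, hswap, ← hg]
  exact dotProduct_le_dotProduct_of_nonneg_right hx hlam

theorem sum_two_mul_weight_mul_le_of_sum_weight_sq_le [CommRing R] [LinearOrder R]
    [IsStrictOrderedRing R] {w x y : E → R} (hw : 0 ≤ w)
    (h : ∑ e, w e * x e ^ 2 ≤ ∑ e, w e * y e ^ 2) :
    ∑ e, 2 * w e * y e * x e ≤ ∑ e, 2 * w e * y e * y e := by
  have hamgm : ∀ e, 2 * w e * y e * x e ≤ w e * x e ^ 2 + w e * y e ^ 2 := fun e => by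
    nlinarith [mul_nonneg (hw e) (sq_nonneg (x e - y e))]
  calc ∑ e, 2 * w e * y e * x e
      ≤ ∑ e, (w e * x e ^ 2 + w e * y e ^ 2) := Finset.sum_le_sum fun e _ => hamgm e
    _ = ∑ e, w e * x e ^ 2 + ∑ e, w e * y e ^ 2 := Finset.sum_add_distrib
    _ ≤ ∑ e, w e * y e ^ 2 + ∑ e, w e * y e ^ 2 := by gcongr
    _ = ∑ e, 2 * w e * y e * y e := by
      rw [← Finset.sum_add_distrib]
      exact Finset.sum_congr rfl fun e _ => by ring

end

theorem stmt_9_general {E V : Type*} [Fintype E] [Fintype V]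
    (A : Matrix E V ℝ) (c : E → ℝ) (g : V → ℝ)
    (Fstar : E → ℝ) (lam : V → ℝ) (ν : V → ℝ)
    (hlam : ∀ i : V, 0 ≤ lam i)
    (hdiv : Aᵀ *ᵥ Fstar = 0)
    (hstat : ∀ e : E, c e + (A *ᵥ ν) e = 2 * (∑ i, |A e i| * lam i) * Fstar e)
    (hcs : ∀ i : V, lam i * ((∑ e, |A e i| * (Fstar e) ^ 2) - (g i) ^ 2) = 0) :
    ∀ F : E → ℝ, Aᵀ *ᵥ F = 0 → (∀ i : V, ∑ e, |A e i| * (F e) ^ 2 ≤ (g i) ^ 2) →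
      ∑ e, c e * F e ≤ ∑ e, c e * Fstar e := by
  intro F hF hFcap
  set B : Matrix E V ℝ := A.map abs
  have hw : 0 ≤ B *ᵥ lam := fun e =>
    Finset.sum_nonneg fun i _ => mul_nonneg (abs_nonneg _) (hlam i)
  have hc : c + A *ᵥ ν = fun e => 2 * (B *ᵥ lam) e * Fstar e := funext hstat
  have hweighted : ∑ e, (B *ᵥ lam) e * F e ^ 2 ≤ ∑ e, (B *ᵥ lam) e * Fstar e ^ 2 :=
    mulVec_dotProduct_le_of_complementary_slackness B (g := g ^ 2) hlam hFcap hcs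
  calc c ⬝ᵥ F = ∑ e, 2 * (B *ᵥ lam) e * Fstar e * F e :=
        dotProduct_eq_of_add_mulVec_eq hc hF
    _ ≤ ∑ e, 2 * (B *ᵥ lam) e * Fstar e * Fstar e :=
      sum_two_mul_weight_mul_le_of_sum_weight_sq_le hw hweighted
    _ = c ⬝ᵥ Fstar := (dotProduct_eq_of_add_mulVec_eq hc hdiv).symm

/-- KKT sufficiency for CCMF optimality: a primal feasible flow `F*` admitting
multipliers `λ ≥ 0`, `ν` satisfying stationarity and complementary slackness is
optimal among all feasible flows. -/
theorem stmt_9 {E V : Type*} [Fintype E] [Fintype V] [Nonempty E] [Nonempty V]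
    (A : Matrix E V ℝ) (c : E → ℝ) (g : V → ℝ)
    (Fstar : E → ℝ) (lam : V → ℝ) (ν : V → ℝ)
    (hlam : ∀ i : V, 0 ≤ lam i)
    (hpos : ∀ e : E, 0 < ∑ i, |A e i| * lam i)
    (hdiv : Aᵀ *ᵥ Fstar = 0)
    (hcap : ∀ i : V, ∑ e, |A e i| * (Fstar e) ^ 2 ≤ (g i) ^ 2)
    (hstat : ∀ e : E, c e + (A *ᵥ ν) e = 2 * (∑ i, |A e i| * lam i) * Fstar e)
    (hcs : ∀ i : V, lam i * ((∑ e, |A e i| * (Fstar e) ^ 2) - (g i) ^ 2) = 0) :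
    ∀ F : E → ℝ, Aᵀ *ᵥ F = 0 → (∀ i : V, ∑ e, |A e i| * (F e) ^ 2 ≤ (g i) ^ 2) →
      ∑ e, c e * F e ≤ ∑ e, c e * Fstar e :=
  stmt_9_general A c g Fstar lam ν hlam hdiv hstat hcs
end
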